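/- arXiv:2605.12080 — 5 statements merged into one kernel-verified Lean document; each statement's English description precedes it below -/
import Mathlib

section
/- Let (X, d) be a metric space, ι a finite index set, Δ > 0 a real number, and t, r : ι → X assignments of transmitter and receiver positions. Suppose the protocol-model separation condition holds: for all i ≠ j in ι, d(t j, r i) ≥ (1+Δ)·d(t i, r i). Then for all i ≠ j, the open ball centered at r i of radius (Δ/2)·d(t i, r i) and the open ball centered at r j of radius (Δ/2)·d(t j, r j) are disjoint. -/
/-! Adding the two separation inequalities for `i` and `j` and bounding each right-hand side by
the triangle inequality through the other receiver gives
`(1 + Δ) (dᵢ + dⱼ) ≤ dᵢ + dⱼ + 2 d(rᵢ, rⱼ)`, i.e. the two guard radii sum to at most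
`d(rᵢ, rⱼ)`. -/

theorem guard_radius_add_guard_radius_le_dist {X : Type*} [PseudoMetricSpace X] {Δ : ℝ}
    {t r t' r' : X} (h : (1 + Δ) * dist t r ≤ dist t' r)
    (h' : (1 + Δ) * dist t' r' ≤ dist t r') :
    Δ / 2 * dist t r + Δ / 2 * dist t' r' ≤ dist r r' := by
  have hr : dist t' r ≤ dist t' r' + dist r r' := by
    simpa only [dist_comm r' r] using dist_triangle t' r' r
  have hr' : dist t r' ≤ dist t r + dist r r' := dist_triangle t r r'
  linarith

theorem stmt_0_general {X : Type*} [MetricSpace X] {ι : Type*}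
    (Δ : ℝ) (t r : ι → X)
    (hsep : ∀ i j : ι, i ≠ j → (1 + Δ) * dist (t i) (r i) ≤ dist (t j) (r i)) :
    ∀ i j : ι, i ≠ j →
      Disjoint (Metric.ball (r i) ((Δ / 2) * dist (t i) (r i)))
        (Metric.ball (r j) ((Δ / 2) * dist (t j) (r j))) :=
  fun i j hij => Metric.ball_disjoint_ball <|
    guard_radius_add_guard_radius_le_dist (hsep i j hij) (hsep j i hij.symm)

/-- **Protocol-model guard disks are disjoint.**
In a metric space, if a finite family of transmitter–receiver pairs `(t i, r i)`
satisfies the protocol-model separation condition with guard parameter `Δ > 0`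
(for all `i ≠ j`, `dist (t j) (r i) ≥ (1+Δ) * dist (t i) (r i)`), then the open
balls centered at the receivers `r i` with radii `(Δ/2) * dist (t i) (r i)` are
pairwise disjoint. -/
theorem stmt_0 {X : Type*} [MetricSpace X] {ι : Type*} [Fintype ι]
    (Δ : ℝ) (hΔ : 0 < Δ) (t r : ι → X)
    (hsep : ∀ i j : ι, i ≠ j → (1 + Δ) * dist (t i) (r i) ≤ dist (t j) (r i)) :
    ∀ i j : ι, i ≠ j →
      Disjoint (Metric.ball (r i) ((Δ / 2) * dist (t i) (r i)))
        (Metric.ball (r j) ((Δ / 2) * dist (t j) (r j))) :=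
  stmt_0_general Δ t r hsep
end

section
/- Let ι be a finite index set, Δ > 0, and t, r : ι → ℝ² (EuclideanSpace ℝ (Fin 2)) with t i ∈ [0,1]×[0,1] and r i ∈ [0,1]×[0,1] for all i. Suppose the protocol-model separation condition holds: for all i ≠ j, dist(t j, r i) ≥ (1+Δ)·dist(t i, r i). Then the total squared transmission distance in one time slot satisfies Σ_{i ∈ ι} dist(t i, r i)² ≤ 4·(1+√2·Δ)²/(π·Δ²). -/
/-!
Put around each receiver `r i` the disc of radius `Δ/2 · |t i r i|`. The separation condition
makes these discs pairwise disjoint, and since links have length at most `√2` they all lie in the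
square `[-Δ/√2, 1 + Δ/√2]²` of area `(1 + √2 Δ)²`. Comparing areas gives
`π Δ²/4 · ∑ |t i r i|² ≤ (1 + √2 Δ)²`.
-/

open Real MeasureTheory Metric Function

/-- Adding the separation conditions for `i` and `j` to the triangle inequalities through `r i` and
`r j` gives `Δ/2 · dᵢ + Δ/2 · dⱼ ≤ dist (r i) (r j)`. -/
theorem pairwise_disjoint_ball_of_protocol {α ι : Type*} [PseudoMetricSpace α] (Δ : ℝ)
    (t r : ι → α)
    (hsep : ∀ i j : ι, i ≠ j → (1 + Δ) * dist (t i) (r i) ≤ dist (t j) (r i)) :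
    Pairwise (Disjoint on fun i => ball (r i) (Δ / 2 * dist (t i) (r i))) := by
  intro i j hij
  apply ball_disjoint_ball
  have hji := dist_triangle (t j) (r j) (r i)
  have hij' := dist_triangle (t i) (r i) (r j)
  rw [dist_comm (r j) (r i)] at hji
  linarith [hsep i j hij, hsep j i hij.symm]

section Cube

variable {ι : Type*} [Fintype ι]

theorem EuclideanSpace.dist_le_sqrt_card_of_mem_Icc {x y : EuclideanSpace ℝ ι}
    (hx : ∀ j, x j ∈ Set.Icc (0 : ℝ) 1) (hy : ∀ j, y j ∈ Set.Icc (0 : ℝ) 1) :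
    dist x y ≤ √(Fintype.card ι) := by
  rw [EuclideanSpace.dist_eq]
  gcongr
  calc ∑ j, dist (x j) (y j) ^ 2 ≤ ∑ _j : ι, (1 : ℝ) := by
        gcongr with j
        rw [Real.dist_eq, sq_abs]
        nlinarith [(hx j).1, (hx j).2, (hy j).1, (hy j).2]
    _ = Fintype.card ι := by simp

theorem EuclideanSpace.ball_subset_setOf_mem_Icc {x : EuclideanSpace ℝ ι} {a b ρ c : ℝ}
    (hx : ∀ j, x j ∈ Set.Icc a b) (hρ : ρ ≤ c) :
    ball x ρ ⊆ {y : EuclideanSpace ℝ ι | ∀ j, y j ∈ Set.Icc (a - c) (b + c)} := by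
  intro y hy j
  have hyj : |y j - x j| < c := by
    rw [← Real.dist_eq]
    exact (PiLp.dist_apply_le y x j).trans_lt (mem_ball.mp hy |>.trans_le hρ)
  obtain ⟨hlow, hupp⟩ := abs_lt.mp hyj
  exact ⟨by linarith [(hx j).1], by linarith [(hx j).2]⟩

theorem EuclideanSpace.volume_setOf_mem_Icc {a b : ℝ} (hab : a ≤ b) :
    volume {y : EuclideanSpace ℝ ι | ∀ j, y j ∈ Set.Icc a b} =
      ENNReal.ofReal ((b - a) ^ Fintype.card ι) := by
  have hcube : {y : EuclideanSpace ℝ ι | ∀ j, y j ∈ Set.Icc a b} =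
      (MeasurableEquiv.toLp 2 (ι → ℝ)).symm ⁻¹' Set.Icc (fun _ => a) (fun _ => b) := by
    ext y
    simp [Pi.le_def, forall_and]
  rw [hcube, (EuclideanSpace.volume_preserving_symm_measurableEquiv_toLp ι).measure_preimage
    measurableSet_Icc.nullMeasurableSet, Real.volume_Icc_pi, Finset.prod_const,
    Finset.card_univ, ENNReal.ofReal_pow (sub_nonneg.mpr hab)]

end Cube

theorem pi_mul_sum_sq_le_volumeReal_of_pairwise_disjoint_ball {ι : Type*} [Fintype ι]
    (x : ι → EuclideanSpace ℝ (Fin 2)) (ρ : ι → ℝ) (hρ : ∀ i, 0 ≤ ρ i)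
    (hdisj : Pairwise (Disjoint on fun i => ball (x i) (ρ i)))
    {S : Set (EuclideanSpace ℝ (Fin 2))} (hS : ∀ i, ball (x i) (ρ i) ⊆ S)
    (hSfin : volume S ≠ ⊤) :
    π * ∑ i, ρ i ^ 2 ≤ volume.real S := by
  have hballs : ENNReal.ofReal (π * ∑ i, ρ i ^ 2) = volume (⋃ i, ball (x i) (ρ i)) := by
    rw [measure_iUnion hdisj fun _ => measurableSet_ball, tsum_fintype, Finset.mul_sum,
      ENNReal.ofReal_sum_of_nonneg fun i _ => by positivity]
    refine Finset.sum_congr rfl fun i _ => ?_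
    rw [EuclideanSpace.volume_ball_fin_two, ← ENNReal.ofReal_pow (hρ i),
      ← ENNReal.ofReal_mul (by positivity), mul_comm]
  rw [measureReal_def, ← ENNReal.ofReal_le_iff_le_toReal hSfin, hballs]
  exact measure_mono (Set.iUnion_subset hS)

/-- **Total squared transmission distance bound under the protocol model.**
If transmitters `t i` and receivers `r i` all lie in the closed unit square of the
Euclidean plane and the protocol-model separation condition with guard parameter
`Δ > 0` holds (for all `i ≠ j`, `dist (t j) (r i) ≥ (1+Δ) * dist (t i) (r i)`),
then `Σ dist (t i) (r i)² ≤ 4 (1 + √2 Δ)² / (π Δ²)`. -/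
theorem stmt_3 {ι : Type*} [Fintype ι]
    (Δ : ℝ) (hΔ : 0 < Δ) (t r : ι → EuclideanSpace ℝ (Fin 2))
    (ht : ∀ i, ∀ j : Fin 2, t i j ∈ Set.Icc (0 : ℝ) 1)
    (hr : ∀ i, ∀ j : Fin 2, r i j ∈ Set.Icc (0 : ℝ) 1)
    (hsep : ∀ i j : ι, i ≠ j → (1 + Δ) * dist (t i) (r i) ≤ dist (t j) (r i)) :
    ∑ i, dist (t i) (r i) ^ 2 ≤ 4 * (1 + Real.sqrt 2 * Δ) ^ 2 / (π * Δ ^ 2) := by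
  set c := Δ * √2 / 2
  have hradius : ∀ i, Δ / 2 * dist (t i) (r i) ≤ c := fun i => by
    have hlen := EuclideanSpace.dist_le_sqrt_card_of_mem_Icc (ht i) (hr i)
    rw [Fintype.card_fin, Nat.cast_ofNat] at hlen
    simp only [c]
    nlinarith
  have hbox := EuclideanSpace.volume_setOf_mem_Icc (ι := Fin 2)
    (a := 0 - c) (b := 1 + c) (by linarith [show 0 ≤ c by positivity])
  have hpack := pi_mul_sum_sq_le_volumeReal_of_pairwise_disjoint_ball r _
    (fun i => by positivity) (pairwise_disjoint_ball_of_protocol Δ t r hsep)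
    (fun i => EuclideanSpace.ball_subset_setOf_mem_Icc (hr i) (hradius i))
    (by rw [hbox]; exact ENNReal.ofReal_ne_top)
  have hside : 1 + c - (0 - c) = 1 + √2 * Δ := by ring
  rw [measureReal_def, hbox, hside, Fintype.card_fin,
    ENNReal.toReal_ofReal (by positivity)] at hpack
  simp only [mul_pow, ← Finset.mul_sum] at hpack
  rw [le_div_iff₀ (by positivity)]
  nlinarith
end

section
/- Let X be a Binomial(n, p) random variable on a probability space, with p ∈ [0,1] and mean μ = n·p. Then for every σ > 0, P(X ≥ (1+σ)·μ) ≤ exp(−μ·σ²/(2+σ)). -/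
/-!
Exponential Markov inequality: for `t ≥ 0`, `P(X ≥ a) ≤ E[exp (t (X - a))]`, and the binomial
moment generating function `(1 + p (eᵗ - 1))ⁿ` is at most `exp (μ (eᵗ - 1))`. The choice
`t = log (1 + σ)` leaves the exponent `μ (σ - (1 + σ) log (1 + σ))`, which
`log (1 + σ) ≥ 2σ / (2 + σ)` bounds by `-μ σ² / (2 + σ)`.
-/

open MeasureTheory Real Finset

-- `exp y ≤ (2 + y) / (2 - y)` at `y = 2x / (2 + x)` reads `exp y ≤ 1 + x`.
lemma two_mul_div_two_add_le_log_one_add {x : ℝ} (hx : 0 ≤ x) :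
    2 * x / (2 + x) ≤ log (1 + x) := by
  have h2x : 0 < 2 + x := by linarith
  rw [le_log_iff_exp_le (by linarith)]
  calc exp (2 * x / (2 + x)) ≤ (2 + 2 * x / (2 + x)) / (2 - 2 * x / (2 + x)) :=
        exp_le_two_add_div_two_sub (by positivity) (by rw [div_lt_iff₀ h2x]; linarith)
    _ = 1 + x := by field_simp; ring

lemma mul_sub_log_one_add_mul_le {μ σ : ℝ} (hμ : 0 ≤ μ) (hσ : 0 ≤ σ) :
    μ * σ - log (1 + σ) * ((1 + σ) * μ) ≤ -(μ * σ ^ 2 / (2 + σ)) := by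
  have h2σ : 0 < 2 + σ := by linarith
  have hlog : 2 * σ ≤ log (1 + σ) * (2 + σ) :=
    (div_le_iff₀ h2σ).1 (two_mul_div_two_add_le_log_one_add hσ)
  have hgap : 0 ≤ μ * (1 + σ) * (log (1 + σ) * (2 + σ) - 2 * σ) / (2 + σ) := by
    have : 0 ≤ μ * (1 + σ) := mul_nonneg hμ (by linarith)
    have : 0 ≤ log (1 + σ) * (2 + σ) - 2 * σ := by linarith
    positivity
  calc μ * σ - log (1 + σ) * ((1 + σ) * μ)
      = -(μ * σ ^ 2 / (2 + σ)) - μ * (1 + σ) * (log (1 + σ) * (2 + σ) - 2 * σ) / (2 + σ) := by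
        field_simp; ring
    _ ≤ -(μ * σ ^ 2 / (2 + σ)) := sub_le_self _ hgap

lemma measure_le_le_tsum_mul_exp {Ω : Type*} [MeasurableSpace Ω] (ℙ : Measure Ω) (X : Ω → ℕ)
    (a : ℝ) {t : ℝ} (ht : 0 ≤ t) :
    ℙ {ω | a ≤ (X ω : ℝ)} ≤ ∑' k : ℕ, ℙ {ω | X ω = k} * ENNReal.ofReal (exp (t * (k - a))) := by
  have hcover : {ω | a ≤ (X ω : ℝ)} ⊆ ⋃ k : ℕ, {ω | X ω = k} ∩ {ω | a ≤ (X ω : ℝ)} :=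
    fun ω hω => Set.mem_iUnion.2 ⟨X ω, rfl, hω⟩
  calc ℙ {ω | a ≤ (X ω : ℝ)}
      ≤ ∑' k : ℕ, ℙ ({ω | X ω = k} ∩ {ω | a ≤ (X ω : ℝ)}) :=
        (measure_mono hcover).trans (measure_iUnion_le _)
    _ ≤ _ := ENNReal.tsum_le_tsum fun k => ?_
  by_cases hk : a ≤ k
  · have hexp : 1 ≤ ENNReal.ofReal (exp (t * (k - a))) :=
      ENNReal.one_le_ofReal.2 (one_le_exp (mul_nonneg ht (sub_nonneg.2 hk)))
    calc ℙ ({ω | X ω = k} ∩ {ω | a ≤ (X ω : ℝ)}) ≤ ℙ {ω | X ω = k} :=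
          measure_mono Set.inter_subset_left
      _ ≤ _ := le_mul_of_one_le_right' hexp
  · have hempty : {ω | X ω = k} ∩ {ω | a ≤ (X ω : ℝ)} = ∅ :=
      Set.eq_empty_of_forall_notMem fun ω ⟨hX, hω⟩ => hk (hX ▸ hω)
    simp [hempty]

lemma sum_choose_mul_pow_mul_exp (n : ℕ) (p t : ℝ) :
    ∑ k ∈ range (n + 1), (n.choose k : ℝ) * p ^ k * (1 - p) ^ (n - k) * exp (t * k) =
      (p * exp t + (1 - p)) ^ n := by
  rw [add_pow]
  refine sum_congr rfl fun k _ => ?_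
  rw [mul_pow, mul_comm t, exp_nat_mul]
  ring

lemma mul_exp_add_one_sub_pow_le {p t : ℝ} (hp : 0 ≤ p) (ht : 0 ≤ t) (n : ℕ) :
    (p * exp t + (1 - p)) ^ n ≤ exp (n * p * (exp t - 1)) := by
  have hpe : 0 ≤ p * (exp t - 1) := mul_nonneg hp (by linarith [one_le_exp ht])
  calc (p * exp t + (1 - p)) ^ n = (p * (exp t - 1) + 1) ^ n := by ring
    _ ≤ exp (p * (exp t - 1)) ^ n := pow_le_pow_left₀ (by linarith) (add_one_le_exp _) n
    _ = exp (n * p * (exp t - 1)) := by rw [← exp_nat_mul, mul_assoc]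

lemma measure_le_le_exp_of_binomial {Ω : Type*} [MeasurableSpace Ω] (ℙ : Measure Ω)
    (n : ℕ) (p : ℝ) (hp : p ∈ Set.Icc (0 : ℝ) 1) (X : Ω → ℕ)
    (hlaw : ∀ k : ℕ, k ≤ n →
      ℙ {ω | X ω = k} = ENNReal.ofReal ((n.choose k : ℝ) * p ^ k * (1 - p) ^ (n - k)))
    (hbound : ∀ k : ℕ, n < k → ℙ {ω | X ω = k} = 0) (a : ℝ) {t : ℝ} (ht : 0 ≤ t) :
    ℙ {ω | a ≤ (X ω : ℝ)} ≤ ENNReal.ofReal (exp (n * p * (exp t - 1) - t * a)) := by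
  have hpmf : ∀ k, 0 ≤ (n.choose k : ℝ) * p ^ k * (1 - p) ^ (n - k) := fun k =>
    mul_nonneg (mul_nonneg (Nat.cast_nonneg _) (pow_nonneg hp.1 k))
      (pow_nonneg (sub_nonneg.2 hp.2) _)
  calc ℙ {ω | a ≤ (X ω : ℝ)}
      ≤ ∑' k : ℕ, ℙ {ω | X ω = k} * ENNReal.ofReal (exp (t * (k - a))) :=
        measure_le_le_tsum_mul_exp ℙ X a ht
    _ = ∑ k ∈ range (n + 1), ENNReal.ofReal
          ((n.choose k : ℝ) * p ^ k * (1 - p) ^ (n - k) * exp (t * (k - a))) := by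
        rw [tsum_eq_sum (s := range (n + 1)) fun k hk => by
          rw [hbound k (by simpa [Nat.lt_succ_iff] using hk), zero_mul]]
        refine sum_congr rfl fun k hk => ?_
        rw [hlaw k (Nat.lt_succ_iff.1 (mem_range.1 hk)), ENNReal.ofReal_mul (hpmf k)]
    _ = ENNReal.ofReal ((p * exp t + (1 - p)) ^ n * exp (-(t * a))) := by
        rw [← ENNReal.ofReal_sum_of_nonneg fun k _ => mul_nonneg (hpmf k) (exp_pos _).le,
          ← sum_choose_mul_pow_mul_exp, sum_mul]
        congr 1
        refine sum_congr rfl fun k _ => ?_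
        rw [mul_sub, sub_eq_add_neg (t * k), exp_add]
        ring
    _ ≤ ENNReal.ofReal (exp (n * p * (exp t - 1)) * exp (-(t * a))) :=
        ENNReal.ofReal_le_ofReal
          (mul_le_mul_of_nonneg_right (mul_exp_add_one_sub_pow_le hp.1 ht n) (exp_pos _).le)
    _ = ENNReal.ofReal (exp (n * p * (exp t - 1) - t * a)) := by rw [← exp_add, ← sub_eq_add_neg]

theorem stmt_4_general {Ω : Type*} [MeasurableSpace Ω] (ℙ : Measure Ω)
    (n : ℕ) (p : ℝ) (hp : p ∈ Set.Icc (0 : ℝ) 1) (X : Ω → ℕ)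
    (hlaw : ∀ k : ℕ, k ≤ n →
      ℙ {ω | X ω = k} = ENNReal.ofReal ((n.choose k : ℝ) * p ^ k * (1 - p) ^ (n - k)))
    (hbound : ∀ k : ℕ, n < k → ℙ {ω | X ω = k} = 0)
    (σ : ℝ) (hσ : 0 < σ) :
    ℙ {ω | (1 + σ) * (n * p) ≤ (X ω : ℝ)} ≤
      ENNReal.ofReal (Real.exp (-((n * p) * σ ^ 2 / (2 + σ)))) := by
  have hσ1 : 0 < 1 + σ := by linarith
  calc ℙ {ω | (1 + σ) * (n * p) ≤ (X ω : ℝ)}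
      ≤ ENNReal.ofReal
          (exp (n * p * (exp (log (1 + σ)) - 1) - log (1 + σ) * ((1 + σ) * (n * p)))) :=
        measure_le_le_exp_of_binomial ℙ n p hp X hlaw hbound _ (log_nonneg (by linarith))
    _ ≤ ENNReal.ofReal (exp (-((n * p) * σ ^ 2 / (2 + σ)))) := by
        rw [exp_log hσ1, add_sub_cancel_left]
        exact ENNReal.ofReal_le_ofReal (exp_le_exp.2
          (mul_sub_log_one_add_mul_le (mul_nonneg n.cast_nonneg hp.1) hσ.le))

/-- **Chernoff upper-tail bound for a binomial random variable.**
If `X` is a `Binomial (n, p)` random variable with mean `μ = n p`, then for every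
`σ > 0`, `P(X ≥ (1+σ) μ) ≤ exp (−μ σ² / (2+σ))`. -/
theorem stmt_4 {Ω : Type*} [MeasurableSpace Ω] (ℙ : Measure Ω) [IsProbabilityMeasure ℙ]
    (n : ℕ) (p : ℝ) (hp : p ∈ Set.Icc (0 : ℝ) 1) (X : Ω → ℕ)
    (hlaw : ∀ k : ℕ, k ≤ n →
      ℙ {ω | X ω = k} = ENNReal.ofReal ((n.choose k : ℝ) * p ^ k * (1 - p) ^ (n - k)))
    (hbound : ∀ k : ℕ, n < k → ℙ {ω | X ω = k} = 0)
    (σ : ℝ) (hσ : 0 < σ) :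
    ℙ {ω | (1 + σ) * (n * p) ≤ (X ω : ℝ)} ≤
      ENNReal.ofReal (Real.exp (-((n * p) * σ ^ 2 / (2 + σ)))) :=
  stmt_4_general ℙ n p hp X hlaw hbound σ hσ
end

section
/- Let k ≥ 1 and n ≥ 1 be natural numbers, q ∈ [0,1), and σ ∈ (0,1). On a probability space let X₁, …, X_n be i.i.d. random points uniformly distributed on the unit square [0,1]² ⊂ ℝ², let B₁, …, B_n be i.i.d. Bernoulli random variables with success probability 1−q, and assume the whole family (X₁,…,X_n,B₁,…,B_n) is mutually independent. Partition [0,1)² into the k² half-open grid cells S_{u,v} = [u/k,(u+1)/k) × [v/k,(v+1)/k) for 0 ≤ u,v < k, let N_{u,v} = #{i : B_i = 1 and X_i ∈ S_{u,v}} be the number of non-faulty nodes in cell (u,v), and let μ = n·(1−q)/k². Then the probability that some cell satisfies N_{u,v} < (1−σ)·μ or N_{u,v} > (1+σ)·μ is at most k²·(exp(−μ·σ²/2) + exp(−μ·σ²/(2+σ))). -/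
open MeasureTheory Real
open scoped Classical

/-- The value space of the combined family `(X₁,…,X_n, B₁,…,B_n)`:
positions in `ℝ²` for the left summands, Bernoulli marks for the right ones. -/
def NodeVal (n : ℕ) : Fin n ⊕ Fin n → Type
  | .inl _ => ℝ × ℝ
  | .inr _ => Bool

instance (n : ℕ) : ∀ s : Fin n ⊕ Fin n, MeasurableSpace (NodeVal n s)
  | .inl _ => inferInstanceAs (MeasurableSpace (ℝ × ℝ))
  | .inr _ => inferInstanceAs (MeasurableSpace Bool)

/-- The half-open grid cell `S_{u,v} = [u/k,(u+1)/k) × [v/k,(v+1)/k)` of the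
partition of `[0,1)²` into `k²` cells. -/
def gridCell (k : ℕ) (u v : Fin k) : Set (ℝ × ℝ) :=
  Set.Ico ((u : ℝ) / k) (((u : ℝ) + 1) / k) ×ˢ Set.Ico ((v : ℝ) / k) (((v : ℝ) + 1) / k)

/-!
Node `i` is non-faulty and lies in a fixed cell with probability `p = (1 - q) / k²`, and by the
independence of the whole family these events are independent across nodes, so the count of a
cell is a sum of `n` independent indicators with mean `μ = n p`. Its moment generating function
is at most `exp (μ (eᵗ - 1))`; evaluating the Chernoff bound at `t = -σ` and using
`e^{-σ} ≤ 1 - σ + σ²/2` gives the lower tail, at `t = log (1 + σ)` and using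
`log (1 + σ) ≥ 2σ / (2 + σ)` the upper one. A union bound over the `k²` cells finishes.
-/

namespace Real

lemma exp_neg_le_one_sub_add_sq_div_two {x : ℝ} (hx : 0 ≤ x) : exp (-x) ≤ 1 - x + x ^ 2 / 2 := by
  let g : ℝ → ℝ := fun y ↦ 1 - y + y ^ 2 / 2 - exp (-y)
  have hg : ∀ y, HasDerivAt g (y - 1 + exp (-y)) y := fun y ↦ by
    have := (((hasDerivAt_id y).const_sub 1).add ((hasDerivAt_pow 2 y).div_const 2)).sub
      (hasDerivAt_neg y).exp
    exact this.congr_deriv (by simp; ring)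
  have hmono : Monotone g := monotone_of_deriv_nonneg (fun y ↦ (hg y).differentiableAt)
    fun y ↦ by rw [(hg y).deriv]; linarith [add_one_le_exp (-y)]
  have h := hmono hx
  simp only [g, neg_zero, exp_zero] at h
  linarith

lemma add_sq_div_two_add_le_one_add_mul_log_one_add {x : ℝ} (hx : 0 ≤ x) :
    x + x ^ 2 / (2 + x) ≤ (1 + x) * log (1 + x) := by
  calc x + x ^ 2 / (2 + x) = (1 + x) * (2 * x / (x + 2)) := by field_simp; ring
    _ ≤ (1 + x) * log (1 + x) := by gcongr; exact le_log_one_add_of_nonneg hx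

end Real

namespace ProbabilityTheory

open Finset

variable {Ω ι : Type*} [MeasurableSpace Ω] {μ : Measure Ω}

section Chernoff

variable [IsProbabilityMeasure μ] [Fintype ι] {A : ι → Set Ω}

lemma mgf_indicator_one {s : Set Ω} (hs : MeasurableSet s) (t : ℝ) :
    mgf (s.indicator (fun _ ↦ 1)) μ t = 1 + (exp t - 1) * μ.real s := by
  have h : (fun ω ↦ exp (t * s.indicator (fun _ ↦ 1) ω)) =
      fun ω ↦ 1 + (exp t - 1) * s.indicator (fun _ ↦ 1) ω := by
    ext ω; by_cases hω : ω ∈ s <;> simp [hω]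
  rw [mgf, h, integral_add (integrable_const 1) (((integrable_const 1).indicator hs).const_mul _),
    integral_const_mul, integral_indicator_const _ hs]
  simp

lemma mgf_sum_indicator_le (hA : ∀ i, MeasurableSet (A i)) (hind : iIndepSet A μ) (t : ℝ) :
    mgf (∑ i, (A i).indicator (fun _ ↦ 1)) μ t ≤ exp ((∑ i, μ.real (A i)) * (exp t - 1)) := by
  rw [hind.iIndepFun_indicator.mgf_sum (fun i ↦ measurable_one.indicator (hA i)), sum_mul, exp_sum]
  gcongr with i
  · exact fun i _ ↦ mgf_nonneg
  · rw [mgf_indicator_one (hA i), mul_comm]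
    linarith [add_one_le_exp (μ.real (A i) * (exp t - 1))]

lemma integrable_exp_mul_sum_indicator (hA : ∀ i, MeasurableSet (A i)) (t : ℝ) :
    Integrable (fun ω ↦ exp (t * (∑ i, (A i).indicator (fun _ ↦ 1)) ω)) μ := by
  refine integrable_exp_mul_of_mem_Icc (a := 0) (b := Fintype.card ι)
    (by fun_prop (disch := exact hA _))
    (ae_of_all _ fun ω ↦ ?_)
  rw [Finset.sum_apply]
  refine ⟨sum_nonneg fun i _ ↦ Set.indicator_nonneg (fun _ _ ↦ zero_le_one) ω, ?_⟩
  calc ∑ i, (A i).indicator (fun _ ↦ 1) ω ≤ ∑ _i : ι, (1 : ℝ) :=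
        sum_le_sum fun i _ ↦ Set.indicator_le_self' (fun _ _ ↦ zero_le_one) ω
    _ = Fintype.card ι := by simp

lemma measureReal_sum_indicator_le_le (hA : ∀ i, MeasurableSet (A i)) (hind : iIndepSet A μ)
    {σ : ℝ} (hσ : 0 ≤ σ) :
    μ.real {ω | (∑ i, (A i).indicator (fun _ ↦ 1)) ω ≤ (1 - σ) * ∑ i, μ.real (A i)} ≤
      exp (-(∑ i, μ.real (A i)) * σ ^ 2 / 2) := by
  set m := ∑ i, μ.real (A i)
  have hm : 0 ≤ m := sum_nonneg fun i _ ↦ measureReal_nonneg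
  calc _ ≤ exp (-(-σ) * ((1 - σ) * m)) * mgf (∑ i, (A i).indicator (fun _ ↦ 1)) μ (-σ) :=
        measure_le_le_exp_mul_mgf _ (neg_nonpos.2 hσ) (integrable_exp_mul_sum_indicator hA _)
    _ ≤ exp (σ * ((1 - σ) * m)) * exp (m * (exp (-σ) - 1)) := by
        rw [neg_neg]; gcongr; exact mgf_sum_indicator_le hA hind _
    _ = exp (m * (exp (-σ) - (1 - σ + σ ^ 2 / 2)) - m * σ ^ 2 / 2) := by rw [← exp_add]; ring_nf
    _ ≤ exp (-m * σ ^ 2 / 2) := by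
        gcongr
        nlinarith [mul_le_mul_of_nonneg_left (exp_neg_le_one_sub_add_sq_div_two hσ) hm]

lemma measureReal_le_sum_indicator_le (hA : ∀ i, MeasurableSet (A i)) (hind : iIndepSet A μ)
    {σ : ℝ} (hσ : 0 ≤ σ) :
    μ.real {ω | (1 + σ) * ∑ i, μ.real (A i) ≤ (∑ i, (A i).indicator (fun _ ↦ 1)) ω} ≤
      exp (-(∑ i, μ.real (A i)) * σ ^ 2 / (2 + σ)) := by
  set m := ∑ i, μ.real (A i)
  have hm : 0 ≤ m := sum_nonneg fun i _ ↦ measureReal_nonneg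
  set t := log (1 + σ)
  have ht : exp t = 1 + σ := exp_log (by linarith)
  calc _ ≤ exp (-t * ((1 + σ) * m)) * mgf (∑ i, (A i).indicator (fun _ ↦ 1)) μ t :=
        measure_ge_le_exp_mul_mgf _ (log_nonneg (by linarith))
          (integrable_exp_mul_sum_indicator hA _)
    _ ≤ exp (-t * ((1 + σ) * m)) * exp (m * (exp t - 1)) := by
        gcongr; exact mgf_sum_indicator_le hA hind _
    _ = exp (-m * ((1 + σ) * t - σ)) := by rw [← exp_add, ht]; ring_nf
    _ ≤ exp (-m * σ ^ 2 / (2 + σ)) := by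
        have := add_sq_div_two_add_le_one_add_mul_log_one_add hσ
        rw [neg_mul, neg_mul, neg_div, exp_le_exp, neg_le_neg_iff, mul_div_assoc]
        gcongr
        linarith

theorem measureReal_sum_indicator_lt_or_gt_le (hA : ∀ i, MeasurableSet (A i))
    (hind : iIndepSet A μ) {σ : ℝ} (hσ : 0 ≤ σ) :
    μ.real {ω | (∑ i, (A i).indicator (fun _ ↦ 1)) ω < (1 - σ) * ∑ i, μ.real (A i) ∨
        (∑ i, (A i).indicator (fun _ ↦ 1)) ω > (1 + σ) * ∑ i, μ.real (A i)} ≤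
      exp (-(∑ i, μ.real (A i)) * σ ^ 2 / 2) + exp (-(∑ i, μ.real (A i)) * σ ^ 2 / (2 + σ)) :=
  calc _ ≤ μ.real ({ω | (∑ i, (A i).indicator (fun _ ↦ 1)) ω ≤ (1 - σ) * ∑ i, μ.real (A i)} ∪
        {ω | (1 + σ) * ∑ i, μ.real (A i) ≤ (∑ i, (A i).indicator (fun _ ↦ 1)) ω}) :=
        measureReal_mono fun _ h ↦ h.imp le_of_lt le_of_lt
    _ ≤ _ := (measureReal_union_le _ _).trans <| add_le_add
        (measureReal_sum_indicator_le_le hA hind hσ) (measureReal_le_sum_indicator_le hA hind hσ)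

end Chernoff

section SumIndex

variable {β : ι ⊕ ι → Type*} [∀ j, MeasurableSpace (β j)] {f : ∀ j, Ω → β j}
  {s : ∀ j, Set (β j)}

lemma iIndepFun.measure_biInter_preimage_inl_inter_inr (hf : iIndepFun f μ)
    (hs : ∀ j, MeasurableSet (s j)) (S : Finset ι) :
    μ (⋂ i ∈ S, f (.inl i) ⁻¹' s (.inl i) ∩ f (.inr i) ⁻¹' s (.inr i)) =
      ∏ i ∈ S, μ (f (.inl i) ⁻¹' s (.inl i)) * μ (f (.inr i) ⁻¹' s (.inr i)) := by
  have h := hf.measure_inter_preimage_eq_mul (S.disjSum S) fun j _ ↦ hs j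
  rw [prod_disjSum, ← prod_mul_distrib] at h
  rw [← h]
  congr 1
  ext ω
  simp [forall_and]

lemma iIndepFun.measure_preimage_inl_inter_inr (hf : iIndepFun f μ)
    (hs : ∀ j, MeasurableSet (s j)) (i : ι) :
    μ (f (.inl i) ⁻¹' s (.inl i) ∩ f (.inr i) ⁻¹' s (.inr i)) =
      μ (f (.inl i) ⁻¹' s (.inl i)) * μ (f (.inr i) ⁻¹' s (.inr i)) := by
  simpa using hf.measure_biInter_preimage_inl_inter_inr hs {i}

lemma iIndepFun.iIndepSet_preimage_inl_inter_inr (hf : iIndepFun f μ)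
    (hfm : ∀ j, Measurable (f j)) (hs : ∀ j, MeasurableSet (s j)) :
    iIndepSet (fun i ↦ f (.inl i) ⁻¹' s (.inl i) ∩ f (.inr i) ⁻¹' s (.inr i)) μ := by
  rw [iIndepSet_iff_meas_biInter fun i ↦ (hfm _ (hs _)).inter (hfm _ (hs _))]
  intro S
  rw [hf.measure_biInter_preimage_inl_inter_inr hs]
  exact prod_congr rfl fun i _ ↦ (hf.measure_preimage_inl_inter_inr hs i).symm

end SumIndex

end ProbabilityTheory

lemma MeasureTheory.measureReal_iUnion_iUnion_le {α κ : Type*} [MeasurableSpace α]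
    {μ : Measure α} [Fintype κ] {s : κ → κ → Set α} {C : ℝ}
    (h : ∀ u v, μ.real (s u v) ≤ C) :
    μ.real (⋃ u, ⋃ v, s u v) ≤ Fintype.card κ ^ 2 * C :=
  calc _ ≤ ∑ u, ∑ v, μ.real (s u v) :=
        (measureReal_iUnion_fintype_le _).trans
          (Finset.sum_le_sum fun u _ ↦ measureReal_iUnion_fintype_le _)
    _ ≤ ∑ _u : κ, ∑ _v : κ, C := by gcongr with u _ v _; exact h u v
    _ = Fintype.card κ ^ 2 * C := by simp; ring

section GridCell

variable {k : ℕ}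

lemma measurableSet_gridCell (u v : Fin k) : MeasurableSet (gridCell k u v) :=
  measurableSet_Ico.prod measurableSet_Ico

lemma Ico_div_subset_Icc_zero_one (u : Fin k) :
    Set.Ico ((u : ℝ) / k) (((u : ℝ) + 1) / k) ⊆ Set.Icc 0 1 := by
  have hk : (0 : ℝ) < k := by exact_mod_cast u.pos
  have hu : (u : ℝ) + 1 ≤ k := by exact_mod_cast u.isLt
  refine Set.Ico_subset_Icc_self.trans (Set.Icc_subset_Icc (by positivity) ?_)
  rwa [div_le_one hk]

lemma gridCell_subset_unitSquare (u v : Fin k) :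
    gridCell k u v ⊆ Set.Icc 0 1 ×ˢ Set.Icc 0 1 :=
  Set.prod_mono (Ico_div_subset_Icc_zero_one u) (Ico_div_subset_Icc_zero_one v)

lemma volume_gridCell (u v : Fin k) : volume (gridCell k u v) = ENNReal.ofReal (1 / k ^ 2) := by
  have hk : (k : ℝ) ≠ 0 := by exact_mod_cast u.pos.ne'
  have hside (u : Fin k) : ((u : ℝ) + 1) / k - u / k = 1 / k := by field_simp; ring
  rw [gridCell, Measure.volume_eq_prod, Measure.prod_prod, Real.volume_Ico, Real.volume_Ico,
    hside, hside, ← ENNReal.ofReal_mul (by positivity)]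
  ring_nf

lemma measure_preimage_gridCell {Ω : Type*} [MeasurableSpace Ω] {μ : Measure Ω}
    {X : Ω → ℝ × ℝ} (hX : Measurable X)
    (hlaw : μ.map X = volume.restrict (Set.Icc 0 1 ×ˢ Set.Icc 0 1)) (u v : Fin k) :
    μ (X ⁻¹' gridCell k u v) = ENNReal.ofReal (1 / k ^ 2) := by
  rw [← Measure.map_apply hX (measurableSet_gridCell u v), hlaw,
    Measure.restrict_eq_self _ (gridCell_subset_unitSquare u v), volume_gridCell]

end GridCell

section Nodes

variable {Ω : Type*} [MeasurableSpace Ω] {μ : Measure Ω} {k n : ℕ}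
  {X : Fin n → Ω → ℝ × ℝ} {B : Fin n → Ω → Bool}

-- Presents the event `X i ∈ gridCell k u v ∧ B i = true` as a preimage under the combined family.
def cellMarks (n : ℕ) (u v : Fin k) : ∀ j : Fin n ⊕ Fin n, Set (NodeVal n j)
  | .inl _ => gridCell k u v
  | .inr _ => {true}

lemma measurableSet_cellMarks (u v : Fin k) : ∀ j, MeasurableSet (cellMarks n u v j)
  | .inl _ => measurableSet_gridCell u v
  | .inr _ => measurableSet_singleton true

lemma iIndepSet_preimage_gridCell_inter_preimage_true (hX : ∀ i, Measurable (X i))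
    (hB : ∀ i, Measurable (B i))
    (hIndep : ProbabilityTheory.iIndepFun (fun s : Fin n ⊕ Fin n ↦
      (match s with | .inl i => X i | .inr i => B i : Ω → NodeVal n s)) μ) (u v : Fin k) :
    ProbabilityTheory.iIndepSet (fun i ↦ X i ⁻¹' gridCell k u v ∩ B i ⁻¹' {true}) μ :=
  hIndep.iIndepSet_preimage_inl_inter_inr (fun | .inl i => hX i | .inr i => hB i)
    (measurableSet_cellMarks u v)

lemma measureReal_preimage_gridCell_inter_preimage_true {q : ℝ} (hq : q ≤ 1)
    (hX : ∀ i, Measurable (X i))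
    (hXlaw : ∀ i, μ.map (X i) = volume.restrict (Set.Icc 0 1 ×ˢ Set.Icc 0 1))
    (hBlaw : ∀ i, μ {ω | B i ω = true} = ENNReal.ofReal (1 - q))
    (hIndep : ProbabilityTheory.iIndepFun (fun s : Fin n ⊕ Fin n ↦
      (match s with | .inl i => X i | .inr i => B i : Ω → NodeVal n s)) μ) (u v : Fin k)
    (i : Fin n) :
    μ.real (X i ⁻¹' gridCell k u v ∩ B i ⁻¹' {true}) = (1 - q) / k ^ 2 := by
  have h : μ (X i ⁻¹' gridCell k u v ∩ B i ⁻¹' {true}) =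
      μ (X i ⁻¹' gridCell k u v) * μ {ω | B i ω = true} :=
    hIndep.measure_preimage_inl_inter_inr (measurableSet_cellMarks u v) i
  have h1q : 0 ≤ 1 - q := by linarith
  rw [measureReal_def, h, measure_preimage_gridCell (hX i) (hXlaw i), hBlaw i,
    ← ENNReal.ofReal_mul (by positivity), ENNReal.toReal_ofReal (by positivity)]
  ring

end Nodes

theorem stmt_7_general {Ω : Type*} [MeasurableSpace Ω] (ℙ : Measure Ω) [IsProbabilityMeasure ℙ]
    (k n : ℕ)
    (q : ℝ) (hq : q ∈ Set.Ico (0 : ℝ) 1) (σ : ℝ) (hσ : σ ∈ Set.Ioo (0 : ℝ) 1)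
    (X : Fin n → Ω → ℝ × ℝ) (B : Fin n → Ω → Bool)
    (hXmeas : ∀ i, Measurable (X i)) (hBmeas : ∀ i, Measurable (B i))
    (hXlaw : ∀ i, Measure.map (X i) ℙ =
      volume.restrict (Set.Icc (0 : ℝ) 1 ×ˢ Set.Icc (0 : ℝ) 1))
    (hBlaw : ∀ i, ℙ {ω | B i ω = true} = ENNReal.ofReal (1 - q))
    (hIndep : ProbabilityTheory.iIndepFun
      (fun s : Fin n ⊕ Fin n => (match s with
        | Sum.inl i => X i
        | Sum.inr i => B i : Ω → NodeVal n s)) ℙ) :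
    ℙ {ω | ∃ u v : Fin k,
        ((Finset.univ.filter
            (fun i : Fin n => B i ω = true ∧ X i ω ∈ gridCell k u v)).card : ℝ)
            < (1 - σ) * (n * (1 - q) / k ^ 2) ∨
        ((Finset.univ.filter
            (fun i : Fin n => B i ω = true ∧ X i ω ∈ gridCell k u v)).card : ℝ)
            > (1 + σ) * (n * (1 - q) / k ^ 2)} ≤
      ENNReal.ofReal ((k : ℝ) ^ 2 *
        (Real.exp (-(n * (1 - q) / k ^ 2) * σ ^ 2 / 2) +
         Real.exp (-(n * (1 - q) / k ^ 2) * σ ^ 2 / (2 + σ)))) := by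
  have hcount (u v : Fin k) (ω : Ω) :
      ((Finset.univ.filter (fun i : Fin n => B i ω = true ∧ X i ω ∈ gridCell k u v)).card : ℝ) =
        (∑ i, (X i ⁻¹' gridCell k u v ∩ B i ⁻¹' {true}).indicator (fun _ ↦ 1)) ω := by
    simp [Set.indicator_apply, and_comm]
  have hmean (u v : Fin k) :
      ∑ i, ℙ.real (X i ⁻¹' gridCell k u v ∩ B i ⁻¹' {true}) = n * (1 - q) / k ^ 2 := by
    simp [measureReal_preimage_gridCell_inter_preimage_true hq.2.le hXmeas hXlaw hBlaw hIndep]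
    ring
  have hcell (u v : Fin k) := ProbabilityTheory.measureReal_sum_indicator_lt_or_gt_le
    (fun i ↦ (hXmeas i (measurableSet_gridCell u v)).inter (hBmeas i (measurableSet_singleton _)))
    (iIndepSet_preimage_gridCell_inter_preimage_true hXmeas hBmeas hIndep u v) hσ.1.le
  simp only [hmean] at hcell
  rw [← ofReal_measureReal]
  refine ENNReal.ofReal_le_ofReal ?_
  simp_rw [hcount, Set.ofPred_exists]
  exact (measureReal_iUnion_iUnion_le hcell).trans_eq (by simp)

/-- **Uniform concentration of the number of non-faulty nodes in every grid cell.**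
`n` nodes are placed i.i.d. uniformly on the unit square, each node is independently
non-faulty with probability `1 − q`, and the whole family `(X₁,…,X_n,B₁,…,B_n)` is
mutually independent.  With `μ = n (1−q) / k²`, the probability that some of the `k²`
grid cells contains fewer than `(1−σ) μ` or more than `(1+σ) μ` non-faulty nodes is
at most `k² (exp (−μσ²/2) + exp (−μσ²/(2+σ)))`. -/
theorem stmt_7 {Ω : Type*} [MeasurableSpace Ω] (ℙ : Measure Ω) [IsProbabilityMeasure ℙ]
    (k n : ℕ) (hk : 1 ≤ k) (hn : 1 ≤ n)
    (q : ℝ) (hq : q ∈ Set.Ico (0 : ℝ) 1) (σ : ℝ) (hσ : σ ∈ Set.Ioo (0 : ℝ) 1)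
    (X : Fin n → Ω → ℝ × ℝ) (B : Fin n → Ω → Bool)
    (hXmeas : ∀ i, Measurable (X i)) (hBmeas : ∀ i, Measurable (B i))
    (hXlaw : ∀ i, Measure.map (X i) ℙ =
      volume.restrict (Set.Icc (0 : ℝ) 1 ×ˢ Set.Icc (0 : ℝ) 1))
    (hBlaw : ∀ i, ℙ {ω | B i ω = true} = ENNReal.ofReal (1 - q))
    (hIndep : ProbabilityTheory.iIndepFun
      (fun s : Fin n ⊕ Fin n => (match s with
        | Sum.inl i => X i
        | Sum.inr i => B i : Ω → NodeVal n s)) ℙ) :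
    ℙ {ω | ∃ u v : Fin k,
        ((Finset.univ.filter
            (fun i : Fin n => B i ω = true ∧ X i ω ∈ gridCell k u v)).card : ℝ)
            < (1 - σ) * (n * (1 - q) / k ^ 2) ∨
        ((Finset.univ.filter
            (fun i : Fin n => B i ω = true ∧ X i ω ∈ gridCell k u v)).card : ℝ)
            > (1 + σ) * (n * (1 - q) / k ^ 2)} ≤
      ENNReal.ofReal ((k : ℝ) ^ 2 *
        (Real.exp (-(n * (1 - q) / k ^ 2) * σ ^ 2 / 2) +
         Real.exp (-(n * (1 - q) / k ^ 2) * σ ^ 2 / (2 + σ)))) :=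
  stmt_7_general ℙ k n q hq σ hσ X B hXmeas hBmeas hXlaw hBlaw hIndep
end

section
/- Let n > 1 be a real number, q ∈ (0,1), and x > 0 a real number satisfying the capacity-balance equation n / log n = (n·(1−q) + x) / log(n + x), where log is the natural logarithm. Then x > n·q. In other words, to restore the failure-free capacity, the number of redundant nodes must strictly exceed the expected number n·q of failed nodes, i.e., x = ε·n·q with ε > 1. -/
open Real

lemma div_log_lt_div_log_of_le {a n m : ℝ} (hn : 1 < n) (hnm : n < m) (ha : a ≤ n) :
    a / log m < n / log n := by
  have hlog_n : 0 < log n := log_pos hn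
  have hlog_lt : log n < log m := log_lt_log (by linarith) hnm
  calc a / log m ≤ n / log m := div_le_div_of_nonneg_right ha (by linarith)
    _ < n / log n := div_lt_div_of_pos_left (by linarith) hlog_n hlog_lt

theorem stmt_12_general (n q x : ℝ) (hn : 1 < n) (hx : 0 < x)
    (hbal : n / Real.log n = (n * (1 - q) + x) / Real.log (n + x)) :
    x > n * q := by
  by_contra! hle
  have hlt : (n * (1 - q) + x) / log (n + x) < n / log n :=
    div_log_lt_div_log_of_le hn (by linarith) (by linarith)
  exact hlt.ne' hbal

/-- **Redundant nodes must exceed the expected number of failed nodes.**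
If `n > 1`, `q ∈ (0,1)`, and `x > 0` satisfies the capacity-balance equation
`n / log n = (n (1−q) + x) / log (n + x)`, then `x > n q`: restoring the
failure-free capacity requires strictly more than `n q` redundant nodes,
i.e. `x = ε n q` with `ε > 1`. -/
theorem stmt_12 (n q x : ℝ) (hn : 1 < n) (hq : q ∈ Set.Ioo (0 : ℝ) 1) (hx : 0 < x)
    (hbal : n / Real.log n = (n * (1 - q) + x) / Real.log (n + x)) :
    x > n * q :=
  stmt_12_general n q x hn hx hbal
end
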